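/- arXiv:2202.00905 — 8 statements merged into one kernel-verified Lean document; each statement's English description precedes it below -/
import Mathlib

section
/- Let p : {1,...,C} → ℝ be a probability distribution with p(c) > 0 for all c, and let q_i : {1,...,C} → ℝ≥0 for i ∈ {1,...,I} satisfy ∑_c q_i(c) ≤ 1 for each i, and ∏_{i=1}^I q_i(c) = p(c)^I for every c. Then q_i(c) = p(c) for all i and c; in particular ∑_c q_i(c) = 1 for all i. -/
/-!
For each colour `c`, the geometric mean of `q 0 c, …, q (I-1) c` is `p c`, so by AM-GM their
arithmetic mean is at least `p c`. Summing over `c`, the average of the masses `∑ c, q i c` is at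
least `∑ c, p c = 1`, while each mass is at most `1`. Hence AM-GM is an equality for every colour,
which forces `q i c = p c`.
-/

open Finset Real

namespace Finset

variable {ι : Type*} {s : Finset ι} {z : ι → ℝ} {a : ℝ}

lemma geom_mean_eq_of_prod_eq_pow (hs : s.Nonempty) (hz : ∀ i ∈ s, 0 ≤ z i) (ha : 0 ≤ a)
    (h : ∏ i ∈ s, z i = a ^ #s) : ∏ i ∈ s, z i ^ ((#s : ℝ)⁻¹) = a := by
  rw [finsetProd_rpow s z hz, h, pow_rpow_inv_natCast ha hs.card_ne_zero]

lemma sum_inv_card_eq_one (hs : s.Nonempty) : ∑ _i ∈ s, (#s : ℝ)⁻¹ = 1 := by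
  rw [sum_const, nsmul_eq_mul, mul_inv_cancel₀ (by exact_mod_cast hs.card_ne_zero)]

lemma card_mul_le_sum_of_prod_eq_pow (hz : ∀ i ∈ s, 0 ≤ z i) (ha : 0 ≤ a)
    (h : ∏ i ∈ s, z i = a ^ #s) : #s * a ≤ ∑ i ∈ s, z i := by
  rcases s.eq_empty_or_nonempty with rfl | hs
  · simp
  have hcard : (0 : ℝ) < #s := by exact_mod_cast hs.card_pos
  have amgm := geom_mean_le_arith_mean_weighted s (fun _ ↦ (#s : ℝ)⁻¹) z
    (fun _ _ ↦ inv_nonneg.2 hcard.le) (sum_inv_card_eq_one hs) hz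
  rw [geom_mean_eq_of_prod_eq_pow hs hz ha h, ← mul_sum] at amgm
  rwa [le_inv_mul_iff₀ hcard] at amgm

lemma eq_of_prod_eq_pow_of_sum_eq (hz : ∀ i ∈ s, 0 ≤ z i) (ha : 0 ≤ a)
    (h : ∏ i ∈ s, z i = a ^ #s) (hsum : ∑ i ∈ s, z i = #s * a) : ∀ i ∈ s, z i = a := by
  rcases s.eq_empty_or_nonempty with rfl | hs
  · simp
  have hcard : (#s : ℝ) ≠ 0 := by exact_mod_cast hs.card_ne_zero
  have hmean : ∑ i ∈ s, (#s : ℝ)⁻¹ * z i = a := by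
    rw [← mul_sum, hsum, inv_mul_cancel_left₀ hcard]
  have hequal := (geom_mean_eq_arith_mean_weighted_iff_of_pos' s (fun _ ↦ (#s : ℝ)⁻¹) z
    (fun _ _ ↦ inv_pos.2 (by exact_mod_cast hs.card_pos)) (sum_inv_card_eq_one hs) hz).1
    (by rw [geom_mean_eq_of_prod_eq_pow hs hz ha h, hmean])
  simpa only [hmean] using hequal

end Finset

theorem holder_color_distribution_lemma_general (C I : ℕ)
    (p : Fin C → ℝ) (hp_pos : ∀ c, 0 < p c) (hp_sum : ∑ c, p c = 1)
    (q : Fin I → Fin C → ℝ) (hq_nonneg : ∀ i c, 0 ≤ q i c)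
    (hq_sum : ∀ i, ∑ c, q i c ≤ 1)
    (hq_prod : ∀ c, ∏ i, q i c = p c ^ I) :
    (∀ i c, q i c = p c) ∧ (∀ i, ∑ c, q i c = 1) := by
  have hprod (c : Fin C) : ∏ i, q i c = p c ^ #(univ : Finset (Fin I)) := by
    rw [card_univ, Fintype.card_fin, hq_prod]
  have hmean_ge (c : Fin C) : (I : ℝ) * p c ≤ ∑ i, q i c := by
    simpa using card_mul_le_sum_of_prod_eq_pow (fun i _ ↦ hq_nonneg i c) (hp_pos c).le (hprod c)
  have htotal : ∑ c, ∑ i, q i c ≤ ∑ c, (I : ℝ) * p c := by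
    rw [sum_comm, ← mul_sum, hp_sum, mul_one]
    simpa using sum_le_sum fun i (_ : i ∈ univ) ↦ hq_sum i
  have hmean_eq (c : Fin C) : ∑ i, q i c = #(univ : Finset (Fin I)) * p c := by
    have := (sum_eq_sum_iff_of_le fun c _ ↦ hmean_ge c).1
      (le_antisymm (sum_le_sum fun c _ ↦ hmean_ge c) htotal) c (mem_univ c)
    simpa using this.symm
  have hq_eq (i : Fin I) (c : Fin C) : q i c = p c :=
    eq_of_prod_eq_pow_of_sum_eq (fun i _ ↦ hq_nonneg i c) (hp_pos c).le (hprod c) (hmean_eq c)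
      i (mem_univ i)
  exact ⟨hq_eq, fun i ↦ by simp only [hq_eq i, hp_sum]⟩

theorem holder_color_distribution_lemma (C I : ℕ) (hI : 0 < I)
    (p : Fin C → ℝ) (hp_pos : ∀ c, 0 < p c) (hp_sum : ∑ c, p c = 1)
    (q : Fin I → Fin C → ℝ) (hq_nonneg : ∀ i c, 0 ≤ q i c)
    (hq_sum : ∀ i, ∑ c, q i c ≤ 1)
    (hq_prod : ∀ c, ∏ i, q i c = p c ^ I) :
    (∀ i c, q i c = p c) ∧ (∀ i, ∑ c, q i c = 1) :=
  holder_color_distribution_lemma_general C I p hp_pos hp_sum q hq_nonneg hq_sum hq_prod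
end

section
/- Let n ≥ 3 be odd. There is no family of real numbers x_S, for S ∈ {0,1,...,n}, satisfying simultaneously: (a) ∑_{S=0}^{n-1} C(n-1, S) x_{S+r} = 0 for r = 0 and r = 1; (b) x_S ≤ (-1)^S for all S > n/2; and (c) x_S ≥ -(-1)^S for all S < n/2. -/
/-!
Write `n = 2p + 1`. Pascal-type identities turn the two equations into
`∑ S, C(n, S) ℓ(S) x_S = 0` for every affine `ℓ`. Take `ℓ(S) = 2(n - 2S) - (-1)^p` and pair
`S ≤ p` with `n - S`: `ℓ` is positive at `S` and negative at `n - S`, so the sign constraints bound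
the pair from below by `2 (-1)^p (-1)^S C(n, S)`, and these bounds add up to `2 C(2p, p) > 0`.
With `ℓ(S) = n - 2S` alone the bounds would add up to `0`; the shift by `-(-1)^p` makes them strict.
-/

open Finset

section BinomialMoments

variable {R : Type*} [CommRing R]

theorem sum_range_choose_succ_mul_sub (m : ℕ) (x : ℕ → R) :
    ∑ S ∈ range (m + 2), ((m + 1).choose S : R) * ((m + 1 : R) - S) * x S
      = (m + 1) * ∑ S ∈ range (m + 1), (m.choose S : R) * x S := by
  rw [sum_range_succ, mul_sum]
  simp only [Nat.cast_add, Nat.cast_one, sub_self, mul_zero, zero_mul, add_zero]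
  refine sum_congr rfl fun S hS => ?_
  have h : ((m.choose S * (m + 1) : ℕ) : R) = ((m + 1).choose S * (m + 1 - S) : ℕ) :=
    congrArg _ (Nat.choose_mul_succ_eq m S)
  push_cast [Nat.cast_sub (show S ≤ m + 1 by grind)] at h
  linear_combination (-(x S)) * h

theorem sum_range_choose_succ_mul_self (m : ℕ) (x : ℕ → R) :
    ∑ S ∈ range (m + 2), ((m + 1).choose S : R) * S * x S
      = (m + 1) * ∑ S ∈ range (m + 1), (m.choose S : R) * x (S + 1) := by
  rw [sum_range_succ', mul_sum]
  simp only [Nat.cast_zero, mul_zero, zero_mul, add_zero]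
  refine sum_congr rfl fun S _ => ?_
  have h : (((m + 1) * m.choose S : ℕ) : R) = ((m + 1).choose (S + 1) * (S + 1) : ℕ) :=
    congrArg _ (Nat.add_one_mul_choose_eq m S)
  push_cast at h ⊢
  linear_combination (-(x (S + 1))) * h

theorem sum_range_choose_two_mul_add_one_mul_neg_one_pow (p : ℕ) :
    ∑ S ∈ range (p + 1), ((2 * p + 1).choose S : R) * (-1) ^ S = (-1) ^ p * (2 * p).choose p := by
  have h := congrArg (Int.cast : ℤ → R)
    (Int.alternating_sum_range_choose_eq_choose (n := 2 * p) (m := p))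
  push_cast at h
  simpa only [mul_comm] using h

end BinomialMoments

theorem sum_range_choose_succ_mul_affine_eq_zero {K : Type*} [Field K] [CharZero K] {m : ℕ}
    {x : ℕ → K} (h₀ : ∑ S ∈ range (m + 1), (m.choose S : K) * x S = 0)
    (h₁ : ∑ S ∈ range (m + 1), (m.choose S : K) * x (S + 1) = 0) (α β : K) :
    ∑ S ∈ range (m + 2), ((m + 1).choose S : K) * (α + β * S) * x S = 0 := by
  have hsplit : (m + 1 : K) * ∑ S ∈ range (m + 2), ((m + 1).choose S : K) * (α + β * S) * x S
      = α * ∑ S ∈ range (m + 2), ((m + 1).choose S : K) * ((m + 1 : K) - S) * x S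
        + (α + β * (m + 1)) * ∑ S ∈ range (m + 2), ((m + 1).choose S : K) * S * x S := by
    simp only [mul_sum, ← sum_add_distrib]
    exact sum_congr rfl fun S _ => by ring
  rw [sum_range_choose_succ_mul_sub, sum_range_choose_succ_mul_self, h₀, h₁] at hsplit
  simpa [Nat.cast_add_one_ne_zero] using hsplit

theorem sum_range_two_mul_add_two_eq_sum_add_reflect {M : Type*} [AddCommMonoid M] (f : ℕ → M)
    (p : ℕ) :
    ∑ S ∈ range (2 * p + 2), f S = ∑ S ∈ range (p + 1), (f S + f (2 * p + 1 - S)) := by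
  rw [show 2 * p + 2 = (p + 1) + (p + 1) by ring, sum_range_add, sum_add_distrib,
    ← sum_range_reflect (fun S => f (p + 1 + S))]
  exact congrArg _ (sum_congr rfl fun S hS => by grind)

theorem neg_one_pow_sub_of_odd {R : Type*} [Monoid R] [HasDistribNeg R] {N S : ℕ} (hN : Odd N)
    (hS : S ≤ N) : (-1 : R) ^ (N - S) = -(-1) ^ S := by
  rcases Nat.even_or_odd S with h | h
  · rw [(Nat.Odd.sub_even hS hN h).neg_one_pow, h.neg_one_pow]
  · rw [(Nat.Odd.sub_odd hN h).neg_one_pow, h.neg_one_pow, neg_neg]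

theorem choose_mul_le_add_choose_mul_reflect {p S : ℕ} (hS : S ≤ p) {e : ℝ} (he : |e| ≤ 2)
    {x : ℕ → ℝ} (hlo : -(-1) ^ S ≤ x S) (hhi : x (2 * p + 1 - S) ≤ (-1) ^ (2 * p + 1 - S)) :
    2 * e * (((2 * p + 1).choose S : ℝ) * (-1) ^ S)
      ≤ ((2 * p + 1).choose S : ℝ) * (2 * (2 * p + 1) - e + -4 * S) * x S
        + ((2 * p + 1).choose (2 * p + 1 - S) : ℝ)
          * (2 * (2 * p + 1) - e + -4 * (2 * p + 1 - S : ℕ)) * x (2 * p + 1 - S) := by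
  rw [neg_one_pow_sub_of_odd (odd_two_mul_add_one p) (by omega)] at hhi
  rw [Nat.choose_symm (by omega), Nat.cast_sub (by omega)]
  have hSp : (S : ℝ) ≤ p := by exact_mod_cast hS
  have hC : (0 : ℝ) ≤ (2 * p + 1).choose S := Nat.cast_nonneg _
  obtain ⟨he₁, he₂⟩ := abs_le.mp he
  push_cast
  linarith [mul_nonneg hC (mul_nonneg (show 0 ≤ 2 * (2 * p + 1) - 4 * S - e by linarith)
      (show 0 ≤ x S + (-1) ^ S by linarith)),
    mul_nonneg hC (mul_nonneg (show 0 ≤ 2 * (2 * p + 1) - 4 * S + e by linarith)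
      (show 0 ≤ -(-1) ^ S - x (2 * p + 1 - S) by linarith))]

theorem ring_odd_infeasible_general (n : ℕ) (hodd : Odd n) :
    ¬ ∃ x : ℕ → ℝ,
      (∀ r : ℕ, r ≤ 1 →
        ∑ S ∈ Finset.range n, ((n - 1).choose S : ℝ) * x (S + r) = 0) ∧
      (∀ S : ℕ, S ≤ n → n < 2 * S → x S ≤ (-1 : ℝ) ^ S) ∧
      (∀ S : ℕ, 2 * S < n → -(-1 : ℝ) ^ S ≤ x S) := by
  rintro ⟨x, heq, hub, hlb⟩
  obtain ⟨p, rfl⟩ := hodd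
  set e : ℝ := (-1) ^ p
  have hzero := sum_range_choose_succ_mul_affine_eq_zero (m := 2 * p)
    (by simpa using heq 0 zero_le_one) (by simpa using heq 1 le_rfl) (2 * (2 * p + 1) - e) (-4)
  rw [sum_range_two_mul_add_two_eq_sum_add_reflect] at hzero
  have he : |e| ≤ 2 := by simp [e]
  have hpairs := sum_le_sum fun S (hS : S ∈ range (p + 1)) =>
    choose_mul_le_add_choose_mul_reflect (Nat.lt_succ_iff.mp (mem_range.mp hS)) he
      (hlb S (by grind)) (hub (2 * p + 1 - S) (by omega) (by grind))
  rw [← mul_sum, hzero, sum_range_choose_two_mul_add_one_mul_neg_one_pow] at hpairs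
  have he2 : e * e = 1 := by rw [← pow_add, Even.neg_one_pow ⟨p, rfl⟩]
  have hcentral : (0 : ℝ) < (2 * p).choose p := by exact_mod_cast Nat.choose_pos (by omega)
  nlinarith

theorem ring_odd_infeasible (n : ℕ) (hn : 3 ≤ n) (hodd : Odd n) :
    ¬ ∃ x : ℕ → ℝ,
      (∀ r : ℕ, r ≤ 1 →
        ∑ S ∈ Finset.range n, ((n - 1).choose S : ℝ) * x (S + r) = 0) ∧
      (∀ S : ℕ, S ≤ n → n < 2 * S → x S ≤ (-1 : ℝ) ^ S) ∧
      (∀ S : ℕ, 2 * S < n → -(-1 : ℝ) ^ S ≤ x S) :=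
  ring_odd_infeasible_general n hodd
end

section
/- Let n = 4k with k ≥ 1. There is no family of real numbers x_S, S ∈ {0,...,n}, satisfying: (a) ∑_{S=0}^{n-1} C(n-1, S) x_{S+r} = 0 for r = 0, 1; (b) x_S ≤ (-1)^S for S > n/2; (c) x_S ≥ -(-1)^S for S < n/2. -/
/-!
Subtracting the two equations and regrouping by `x_T` gives `∑_{T ≤ n} c_T x_T = 0` with
`c_T = C(n-1, T) - C(n-1, T-1)`. These coefficients are `≥ 0` below the middle, vanish at
`T = n/2` and are `≤ 0` above it, so the sign constraints bound each term `c_T x_T` from below by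
`∓(-1)^T c_T`. The alternating partial sums of the `c_T` for `n - 1` are, up to sign, the `c_T`
for `n - 2`; summing the termwise bounds therefore gives
`0 ≥ 2 (C(n-2, n/2-1) - C(n-2, n/2-2)) > 0`, where the sign comes from `n/2 - 1` being odd.
-/

open Finset

namespace Nat

theorem choose_lt_succ_of_lt_half_left {r n : ℕ} (h : r < n / 2) :
    n.choose r < n.choose (r + 1) := by
  have hpos : 0 < n.choose r := choose_pos (by omega)
  refine Nat.lt_of_mul_lt_mul_right (a := r + 1) ?_
  rw [choose_succ_right_eq]
  exact Nat.mul_lt_mul_of_pos_left (by omega) hpos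

theorem choose_succ_le_of_half_le {r n : ℕ} (h : n / 2 ≤ r) :
    n.choose (r + 1) ≤ n.choose r := by
  refine Nat.le_of_mul_le_mul_right (c := r + 1) ?_ (by omega)
  rw [choose_succ_right_eq]
  exact Nat.mul_le_mul_left _ (by omega)

end Nat

/-- `chooseDiff m T = C(m, T) - C(m, T - 1)`, with the convention `C(m, -1) = 0`. -/
def chooseDiff (m : ℕ) : ℕ → ℝ
  | 0 => 1
  | T + 1 => (m.choose (T + 1) : ℝ) - m.choose T

theorem chooseDiff_succ_succ (m N : ℕ) :
    chooseDiff (m + 1) (N + 1) = chooseDiff m N + chooseDiff m (N + 1) := by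
  cases N <;> simp only [chooseDiff, Nat.choose_succ_succ, Nat.choose_zero_right] <;> push_cast <;> ring

theorem chooseDiff_pos {m T : ℕ} (h : T ≤ m / 2) : 0 < chooseDiff m T := by
  cases T with
  | zero => simp [chooseDiff]
  | succ T =>
    have := Nat.choose_lt_succ_of_lt_half_left (show T < m / 2 by omega)
    simpa [chooseDiff] using (Nat.cast_lt (α := ℝ)).2 this

theorem chooseDiff_nonpos {m T : ℕ} (h : m / 2 < T) : chooseDiff m T ≤ 0 := by
  obtain ⟨T, rfl⟩ : ∃ T', T = T' + 1 := ⟨T - 1, by omega⟩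
  have := Nat.choose_succ_le_of_half_le (show m / 2 ≤ T by omega)
  simpa [chooseDiff] using (Nat.cast_le (α := ℝ)).2 this

theorem chooseDiff_eq_zero_of_lt {m T : ℕ} (h : m + 1 < T) : chooseDiff m T = 0 := by
  obtain ⟨T, rfl⟩ : ∃ T', T = T' + 1 := ⟨T - 1, by omega⟩
  simp [chooseDiff, Nat.choose_eq_zero_of_lt (show m < T by omega),
    Nat.choose_eq_zero_of_lt (show m < T + 1 by omega)]

theorem chooseDiff_two_mul_add_one_middle (a : ℕ) : chooseDiff (2 * a + 1) (a + 1) = 0 := by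
  simp [chooseDiff, Nat.choose_symm_half]

theorem sum_range_neg_one_pow_mul_chooseDiff (m N : ℕ) :
    ∑ T ∈ range (N + 1), (-1 : ℝ) ^ T * chooseDiff (m + 1) T = (-1) ^ N * chooseDiff m N := by
  induction N with
  | zero => simp [chooseDiff]
  | succ N ih =>
    rw [sum_range_succ, ih, chooseDiff_succ_succ]
    ring

theorem sum_range_chooseDiff_mul (m : ℕ) (x : ℕ → ℝ) :
    ∑ T ∈ range (m + 2), chooseDiff m T * x T =
      ∑ S ∈ range (m + 1), (m.choose S : ℝ) * x S -
        ∑ S ∈ range (m + 1), (m.choose S : ℝ) * x (S + 1) := by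
  rw [sum_range_succ', sum_range_succ' (fun S => (m.choose S : ℝ) * x S)]
  simp only [chooseDiff, sub_mul, sum_sub_distrib]
  rw [sum_range_succ (fun T => (m.choose (T + 1) : ℝ) * x (T + 1))]
  simp only [Nat.choose_succ_self, Nat.choose_zero_right]
  push_cast
  ring

theorem sub_two_mul_sum_le_sum_chooseDiff_mul (a : ℕ) (x : ℕ → ℝ)
    (hlow : ∀ T ≤ a, -(-1 : ℝ) ^ T ≤ x T)
    (hhigh : ∀ T, a + 1 < T → T ≤ 2 * a + 2 → x T ≤ (-1 : ℝ) ^ T) :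
    ∑ T ∈ range (2 * a + 3), (-1 : ℝ) ^ T * chooseDiff (2 * a + 1) T -
        2 * ∑ T ∈ range (a + 1), (-1 : ℝ) ^ T * chooseDiff (2 * a + 1) T ≤
      ∑ T ∈ range (2 * a + 3), chooseDiff (2 * a + 1) T * x T := by
  have hsplit : a + 1 ≤ 2 * a + 3 := by omega
  rw [← sum_range_add_sum_Ico _ hsplit, ← sum_range_add_sum_Ico _ hsplit]
  have hbelow : -∑ T ∈ range (a + 1), (-1 : ℝ) ^ T * chooseDiff (2 * a + 1) T ≤
      ∑ T ∈ range (a + 1), chooseDiff (2 * a + 1) T * x T := by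
    rw [← sum_neg_distrib]
    refine sum_le_sum fun T hT => ?_
    rw [mem_range] at hT
    have hc := (chooseDiff_pos (m := 2 * a + 1) (T := T) (by omega)).le
    nlinarith [hlow T (by omega)]
  have habove : ∑ T ∈ Ico (a + 1) (2 * a + 3), (-1 : ℝ) ^ T * chooseDiff (2 * a + 1) T ≤
      ∑ T ∈ Ico (a + 1) (2 * a + 3), chooseDiff (2 * a + 1) T * x T := by
    refine sum_le_sum fun T hT => ?_
    rw [mem_Ico] at hT
    rcases hT.1.eq_or_lt with rfl | hlt
    · simp [chooseDiff_two_mul_add_one_middle]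
    · have hc := chooseDiff_nonpos (m := 2 * a + 1) (T := T) (by omega)
      nlinarith [hhigh T hlt (by omega)]
  linarith

theorem ring_4k_infeasible (k n : ℕ) (hk : 1 ≤ k) (hn : n = 4 * k) :
    ¬ ∃ x : ℕ → ℝ,
      (∀ r : ℕ, r ≤ 1 →
        ∑ S ∈ Finset.range n, ((n - 1).choose S : ℝ) * x (S + r) = 0) ∧
      (∀ S : ℕ, S ≤ n → n < 2 * S → x S ≤ (-1 : ℝ) ^ S) ∧
      (∀ S : ℕ, 2 * S < n → -(-1 : ℝ) ^ S ≤ x S) := by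
  rintro ⟨x, hsum, hub, hlb⟩
  obtain ⟨a, rfl, ha⟩ : ∃ a, n = 2 * a + 2 ∧ Odd a := ⟨2 * k - 1, by omega, k - 1, by omega⟩
  have hcomb : ∑ T ∈ range (2 * a + 3), chooseDiff (2 * a + 1) T * x T = 0 := by
    have h0 := hsum 0 zero_le_one
    have h1 := hsum 1 le_rfl
    simp only [show 2 * a + 2 - 1 = 2 * a + 1 by omega, add_zero] at h0 h1
    rw [sum_range_chooseDiff_mul, show 2 * a + 1 + 1 = 2 * a + 2 by omega, h0, h1, sub_zero]
  have hbound := sub_two_mul_sum_le_sum_chooseDiff_mul a x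
    (fun T hT => hlb T (by omega)) (fun T hT hT' => hub T hT' (by omega))
  rw [sum_range_neg_one_pow_mul_chooseDiff, sum_range_neg_one_pow_mul_chooseDiff,
    chooseDiff_eq_zero_of_lt (by omega), ha.neg_one_pow, hcomb] at hbound
  have hmid := chooseDiff_pos (m := 2 * a) (T := a) (by omega)
  linarith
end

section
/- Let n ≥ 3 be odd and suppose C > 0 satisfies C·C(n-1,S) ≥ C(n-1,S-1) for all S < n/2 and C·C(n-1,S) ≤ C(n-1,S-1) for all S > n/2. If real numbers x_S (S ∈ {0,...,n}) satisfy ∑_{S=0}^{n} (C·C(n-1,S) - C(n-1,S-1)) x_S = 0, together with x_S ≤ (-1)^S for S > n/2 and x_S ≥ -(-1)^S for S < n/2, then 0 ≥ (C-1)·(-1)^{(n+1)/2}·C(n-1,(n-1)/2). -/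
/-!
Write `n = 2m + 1` and let `a_S = C·C(2m,S) - C(2m,S-1)` and `f_S = ∓(-1)^S` according as
`S ≤ m` or `S > m`. The hypotheses give `a_S` the sign that makes `a_S x_S ≥ a_S f_S` termwise,
so `0 = ∑ a_S x_S ≥ ∑ a_S f_S`. Summation by parts turns `∑ a_S f_S` into
`∑ C(2m,S) (C f_S - f_{S+1})`; since `f` alternates except between `m` and `m + 1`, this is
`(C + 1) ∑ C(2m,S) f_S - 2 C(2m,m) f_m`, and in `∑ C(2m,S) f_S` the terms `S` and `2m - S` cancel,
leaving `C(2m,m) f_m`. Hence `∑ a_S f_S = (C - 1) (-1)^(m+1) C(2m,m)`.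
-/

open Finset

-- The `if` realises `C(N, -1) = 0`; in `ℕ`, `0 - 1 = 0`.
noncomputable def binomWeight (C : ℝ) (N S : ℕ) : ℝ :=
  C * N.choose S - if S = 0 then 0 else (N.choose (S - 1) : ℝ)

noncomputable def flipSign (m S : ℕ) : ℝ := if S ≤ m then -(-1) ^ S else (-1) ^ S

lemma sum_binomWeight_mul (C : ℝ) (N : ℕ) (g : ℕ → ℝ) :
    ∑ S ∈ range (N + 2), binomWeight C N S * g S =
      ∑ S ∈ range (N + 1), N.choose S * (C * g S - g (S + 1)) := by
  have hlast : ∑ S ∈ range (N + 2), C * N.choose S * g S =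
      ∑ S ∈ range (N + 1), C * N.choose S * g S := by
    simp [sum_range_succ _ (N + 1), Nat.choose_succ_self]
  have hshift : ∑ S ∈ range (N + 2), (if S = 0 then 0 else (N.choose (S - 1) : ℝ)) * g S =
      ∑ S ∈ range (N + 1), N.choose S * g (S + 1) := by
    simp [sum_range_succ' _ (N + 1)]
  simp only [binomWeight, sub_mul, sum_sub_distrib]
  rw [hlast, hshift, ← sum_sub_distrib]
  exact sum_congr rfl fun S _ => by ring

lemma flipSign_succ (m S : ℕ) :
    flipSign m (S + 1) = if S = m then flipSign m S else -flipSign m S := by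
  unfold flipSign
  rcases lt_trichotomy S m with h | rfl | h
  · simp [h.ne, h.le, Nat.succ_le_of_lt h, pow_succ]
  · simp [pow_succ]
  · simp [h.ne', not_le.2 h, not_le.2 (Nat.lt_succ_of_lt h), pow_succ]

lemma flipSign_reflect {m S : ℕ} (hS : S ≤ 2 * m) (hSm : S ≠ m) :
    flipSign m (2 * m - S) = -flipSign m S := by
  have hpow : (-1 : ℝ) ^ (2 * m - S) = (-1) ^ S := by
    rw [neg_one_pow_eq_pow_mod_two, neg_one_pow_eq_pow_mod_two (n := S)]
    congr 1
    omega
  unfold flipSign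
  rcases lt_or_gt_of_ne hSm with h | h
  · simp [hpow, h.le, show ¬ 2 * m - S ≤ m by omega]
  · simp [hpow, not_le.2 h, show 2 * m - S ≤ m by omega]

lemma sum_choose_mul_flipSign (m : ℕ) :
    ∑ S ∈ range (2 * m + 1), ((2 * m).choose S : ℝ) * flipSign m S =
      (2 * m).choose m * flipSign m m := by
  set g : ℕ → ℝ := fun S => (2 * m).choose S * flipSign m S
  have hreflect : ∑ S ∈ range (2 * m + 1), g (2 * m - S) = ∑ S ∈ range (2 * m + 1), g S :=
    sum_range_reflect g (2 * m + 1)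
  have hpair : ∀ S ∈ range (2 * m + 1), g S + g (2 * m - S) = if S = m then 2 * g m else 0 := by
    intro S hS
    have hS : S ≤ 2 * m := Nat.lt_succ_iff.1 (mem_range.1 hS)
    by_cases hSm : S = m
    · subst hSm; simp [g, two_mul]
    · simp [g, hSm, Nat.choose_symm hS, flipSign_reflect hS hSm]
  have := sum_congr rfl hpair
  rw [sum_add_distrib, hreflect, sum_ite_eq' _ m, if_pos (by simp; omega)] at this
  linarith

lemma sum_binomWeight_mul_flipSign (C : ℝ) (m : ℕ) :
    ∑ S ∈ range (2 * m + 2), binomWeight C (2 * m) S * flipSign m S =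
      (C - 1) * (-1) ^ (m + 1) * (2 * m).choose m := by
  have hstep : ∀ S, ((2 * m).choose S : ℝ) * (C * flipSign m S - flipSign m (S + 1)) =
      (C + 1) * ((2 * m).choose S * flipSign m S) -
        if S = m then 2 * ((2 * m).choose m * flipSign m m) else 0 := by
    intro S
    rw [flipSign_succ]
    split_ifs with h
    · subst h; ring
    · ring
  rw [sum_binomWeight_mul, sum_congr rfl fun S _ => hstep S, sum_sub_distrib, ← mul_sum,
    sum_choose_mul_flipSign, sum_ite_eq' _ m, if_pos (by simp; omega)]
  simp only [flipSign, le_rfl, if_true, pow_succ]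
  ring

theorem odd_ring_telescoping_bound_general (n : ℕ) (hodd : Odd n)
    (C : ℝ)
    (hC1 : ∀ S : ℕ, 2 * S < n →
      (if S = 0 then 0 else ((n - 1).choose (S - 1) : ℝ))
        ≤ C * ((n - 1).choose S : ℝ))
    (hC2 : ∀ S : ℕ, n < 2 * S → S ≤ n →
      C * ((n - 1).choose S : ℝ)
        ≤ (if S = 0 then 0 else ((n - 1).choose (S - 1) : ℝ)))
    (x : ℕ → ℝ)
    (hsum : ∑ S ∈ Finset.range (n + 1),
      (C * ((n - 1).choose S : ℝ)
        - (if S = 0 then 0 else ((n - 1).choose (S - 1) : ℝ))) * x S = 0)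
    (hupper : ∀ S : ℕ, n < 2 * S → S ≤ n → x S ≤ (-1 : ℝ) ^ S)
    (hlower : ∀ S : ℕ, 2 * S < n → -(-1 : ℝ) ^ S ≤ x S) :
    (C - 1) * (-1 : ℝ) ^ ((n + 1) / 2) * ((n - 1).choose ((n - 1) / 2) : ℝ) ≤ 0 := by
  obtain ⟨m, rfl⟩ := hodd
  simp only [Nat.add_sub_cancel, show (2 * m + 1 + 1) / 2 = m + 1 by omega,
    show 2 * m / 2 = m by omega] at *
  have hterm : ∀ S ∈ range (2 * m + 2),
      binomWeight C (2 * m) S * flipSign m S ≤ binomWeight C (2 * m) S * x S := by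
    intro S hS
    have hS : S ≤ 2 * m + 1 := Nat.lt_succ_iff.1 (mem_range.1 hS)
    by_cases hSm : S ≤ m
    · rw [flipSign, if_pos hSm]
      exact mul_le_mul_of_nonneg_left (hlower S (by omega)) (sub_nonneg.2 (hC1 S (by omega)))
    · rw [flipSign, if_neg hSm]
      exact mul_le_mul_of_nonpos_left (hupper S (by omega) hS)
        (sub_nonpos.2 (hC2 S (by omega) hS))
  calc (C - 1) * (-1) ^ (m + 1) * ((2 * m).choose m : ℝ)
      = ∑ S ∈ range (2 * m + 2), binomWeight C (2 * m) S * flipSign m S :=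
        (sum_binomWeight_mul_flipSign C m).symm
    _ ≤ ∑ S ∈ range (2 * m + 2), binomWeight C (2 * m) S * x S := sum_le_sum hterm
    _ = 0 := hsum

theorem odd_ring_telescoping_bound (n : ℕ) (hn : 3 ≤ n) (hodd : Odd n)
    (C : ℝ) (hC : 0 < C)
    (hC1 : ∀ S : ℕ, 2 * S < n →
      (if S = 0 then 0 else ((n - 1).choose (S - 1) : ℝ))
        ≤ C * ((n - 1).choose S : ℝ))
    (hC2 : ∀ S : ℕ, n < 2 * S → S ≤ n →
      C * ((n - 1).choose S : ℝ)
        ≤ (if S = 0 then 0 else ((n - 1).choose (S - 1) : ℝ)))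
    (x : ℕ → ℝ)
    (hsum : ∑ S ∈ Finset.range (n + 1),
      (C * ((n - 1).choose S : ℝ)
        - (if S = 0 then 0 else ((n - 1).choose (S - 1) : ℝ))) * x S = 0)
    (hupper : ∀ S : ℕ, n < 2 * S → S ≤ n → x S ≤ (-1 : ℝ) ^ S)
    (hlower : ∀ S : ℕ, 2 * S < n → -(-1 : ℝ) ^ S ≤ x S) :
    (C - 1) * (-1 : ℝ) ^ ((n + 1) / 2) * ((n - 1).choose ((n - 1) / 2) : ℝ) ≤ 0 :=
  odd_ring_telescoping_bound_general n hodd C hC1 hC2 x hsum hupper hlower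
end

section
/- Finner's inequality for bipartite networks: Let S_1,...,S_I be independent random variables, and for each j ∈ {1,...,J} let g_j be a bounded measurable function depending only on the variables {S_i : i → j} according to a bipartite incidence relation. Suppose there exist weights 0 < x_j < 1 with ∑_{j: i → j} x_j = 1 for every i. Then E[∏_j |g_j|] ≤ ∏_j (E[|g_j|^{1/x_j}])^{x_j}. -/
open MeasureTheory Finset
open scoped ENNReal

/-!
Integrate the sources out one at a time, keeping the remaining variables as parameters
(the marginals `∫⋯∫⁻_s`). When `S_i` is integrated out, the factors `g_j` with `¬ i → j` are
constant in `S_i`, while the exponents `x_j` of the others sum to `1`, so Hölder's inequality in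
`S_i` alone gives the inductive step.
-/

theorem lintegral_prod_rpow_le_of_const_of_notMem {α ι : Type*} [Fintype ι] [MeasurableSpace α]
    {μ : Measure α} [IsProbabilityMeasure μ] (s : Finset ι) {f : ι → α → ℝ≥0∞}
    (hf : ∀ j ∈ s, AEMeasurable (f j) μ) {p : ι → ℝ} (hp : ∑ j ∈ s, p j = 1)
    (h2p : ∀ j ∈ s, 0 ≤ p j) (hconst : ∀ j ∉ s, ∀ a b, f j a = f j b) :
    ∫⁻ a, ∏ j, f j a ^ p j ∂μ ≤ ∏ j, (∫⁻ a, f j a ∂μ) ^ p j := by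
  classical
  obtain ⟨a₀⟩ := nonempty_of_isProbabilityMeasure μ
  have hconst_integral : ∏ j ∈ sᶜ, (∫⁻ a, f j a ∂μ) ^ p j = ∏ j ∈ sᶜ, f j a₀ ^ p j :=
    prod_congr rfl fun j hj => by simp [hconst j (mem_compl.mp hj) _ a₀]
  have hsplit : ∀ a, ∏ j, f j a ^ p j = (∏ j ∈ s, f j a ^ p j) * ∏ j ∈ sᶜ, f j a₀ ^ p j :=
    fun a => by
      rw [← prod_mul_prod_compl s]
      congr 1
      exact prod_congr rfl fun j hj => by rw [hconst j (mem_compl.mp hj) a a₀]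
  calc ∫⁻ a, ∏ j, f j a ^ p j ∂μ
      = (∫⁻ a, ∏ j ∈ s, f j a ^ p j ∂μ) * ∏ j ∈ sᶜ, f j a₀ ^ p j := by
        simp_rw [hsplit]
        exact lintegral_mul_const'' _ (aemeasurable_fun_prod _ fun j hj => (hf j hj).pow_const _)
    _ ≤ (∏ j ∈ s, (∫⁻ a, f j a ∂μ) ^ p j) * ∏ j ∈ sᶜ, (∫⁻ a, f j a ∂μ) ^ p j := by
        rw [hconst_integral]
        gcongr
        exact ENNReal.lintegral_prod_norm_pow_le s hf hp h2p
    _ = ∏ j, (∫⁻ a, f j a ∂μ) ^ p j := prod_mul_prod_compl s _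

section Marginal

variable {δ : Type*} [DecidableEq δ] {X : δ → Type*} [∀ i, MeasurableSpace (X i)]
  {μ : ∀ i, Measure (X i)}

theorem DependsOn.lmarginal {f : (∀ i, X i) → ℝ≥0∞} {t : Set δ} (hf : DependsOn f t)
    (s : Finset δ) : DependsOn (∫⋯∫⁻_s, f ∂μ) (t \ s) :=
  fun _ _ hxy => lintegral_congr fun z => hf.updateFinset z hxy

theorem lmarginal_prod_rpow_le [∀ i, IsProbabilityMeasure (μ i)] {ι : Type*} [Fintype ι]
    (E : δ → ι → Prop) [∀ i, DecidablePred (E i)] {p : ι → ℝ}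
    (hp : ∀ i, ∑ j ∈ univ.filter (E i), p j = 1) (h2p : ∀ j, 0 ≤ p j)
    {F : ι → (∀ i, X i) → ℝ≥0∞} (hF : ∀ j, Measurable (F j))
    (hdep : ∀ j, DependsOn (F j) {i | E i j}) (s : Finset δ) (y : ∀ i, X i) :
    (∫⋯∫⁻_s, (fun a => ∏ j, F j a ^ p j) ∂μ) y ≤ ∏ j, (∫⋯∫⁻_s, F j ∂μ) y ^ p j := by
  induction s using Finset.induction generalizing y with
  | empty => simp
  | insert i s hi ih =>
    rw [lmarginal_insert _ (measurable_prod _ fun j _ => (hF j).pow_const _) hi]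
    simp_rw [lmarginal_insert _ (hF _) hi]
    refine (lintegral_mono fun z => ih _).trans ?_
    refine lintegral_prod_rpow_le_of_const_of_notMem _
      (fun j _ => ((hF j).lmarginal μ).comp (measurable_update y) |>.aemeasurable)
      (hp i) (fun j _ => h2p j) fun j hj z z' => ?_
    refine ((hdep j).lmarginal s).mono Set.sdiff_subset fun k hk => ?_
    have hki : k ≠ i := by rintro rfl; exact hj (by simpa using hk)
    simp [Function.update_of_ne hki]

theorem lintegral_prod_rpow_le_of_dependsOn [Fintype δ] [∀ i, IsProbabilityMeasure (μ i)]
    {ι : Type*} [Fintype ι] (E : δ → ι → Prop) [∀ i, DecidablePred (E i)] {p : ι → ℝ}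
    (hp : ∀ i, ∑ j ∈ univ.filter (E i), p j = 1) (h2p : ∀ j, 0 ≤ p j)
    {F : ι → (∀ i, X i) → ℝ≥0∞} (hF : ∀ j, Measurable (F j))
    (hdep : ∀ j, DependsOn (F j) {i | E i j}) :
    ∫⁻ a, ∏ j, F j a ^ p j ∂Measure.pi μ ≤ ∏ j, (∫⁻ a, F j a ∂Measure.pi μ) ^ p j := by
  obtain ⟨y⟩ := nonempty_of_isProbabilityMeasure (Measure.pi μ)
  simpa only [lmarginal_univ] using lmarginal_prod_rpow_le (μ := μ) E hp h2p hF hdep univ y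

end Marginal

theorem integral_abs_rpow_eq_toReal_lintegral {α : Type*} [MeasurableSpace α] {μ : Measure α}
    {f : α → ℝ} (hf : AEMeasurable f μ) {q : ℝ} (hq : 0 ≤ q) :
    ∫ a, |f a| ^ q ∂μ = (∫⁻ a, ENNReal.ofReal |f a| ^ q ∂μ).toReal := by
  rw [integral_eq_lintegral_of_nonneg_ae (ae_of_all _ fun a => by positivity)
    (hf.abs.pow_const _).aestronglyMeasurable]
  simp_rw [ENNReal.ofReal_rpow_of_nonneg (abs_nonneg _) hq]

theorem lintegral_ofReal_abs_rpow_lt_top {α : Type*} [MeasurableSpace α] {μ : Measure α}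
    [IsFiniteMeasure μ] {f : α → ℝ} {M : ℝ} (hM : ∀ a, |f a| ≤ M) {q : ℝ} (hq : 0 ≤ q) :
    ∫⁻ a, ENNReal.ofReal |f a| ^ q ∂μ < ∞ :=
  (lintegral_mono fun a => ENNReal.rpow_le_rpow (ENNReal.ofReal_le_ofReal (hM a)) hq).trans_lt
    (lintegral_const_lt_top (ENNReal.rpow_ne_top_of_nonneg hq ENNReal.ofReal_ne_top))

theorem finner_inequality
    {I J : ℕ} (Ωi : Fin I → Type*) [∀ i, MeasurableSpace (Ωi i)]
    (μ : ∀ i, Measure (Ωi i)) [∀ i, IsProbabilityMeasure (μ i)]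
    (E : Fin I → Fin J → Prop) [∀ i, DecidablePred (E i)]
    (x : Fin J → ℝ) (hx : ∀ j, 0 < x j ∧ x j < 1)
    (hPFIS : ∀ i, ∑ j ∈ Finset.univ.filter (fun j => E i j), x j = 1)
    (g : Fin J → (∀ i, Ωi i) → ℝ)
    (hmeas : ∀ j, Measurable (g j))
    (hbdd : ∀ j, ∃ M : ℝ, ∀ a, |g j a| ≤ M)
    (hdep : ∀ j, ∀ a b : ∀ i, Ωi i, (∀ i, E i j → a i = b i) → g j a = g j b) :
    ∫ a, ∏ j, |g j a| ∂(Measure.pi μ)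
      ≤ ∏ j, (∫ a, |g j a| ^ (1 / x j) ∂(Measure.pi μ)) ^ (x j) := by
  set F : Fin J → (∀ i, Ωi i) → ℝ≥0∞ := fun j a => ENNReal.ofReal |g j a| ^ (1 / x j)
  have hx₀ : ∀ j, 0 ≤ 1 / x j := fun j => one_div_nonneg.mpr (hx j).1.le
  have hF_rpow : ∀ j a, F j a ^ x j = ENNReal.ofReal |g j a| := fun j a => by
    rw [← ENNReal.rpow_mul, one_div_mul_cancel (hx j).1.ne', ENNReal.rpow_one]
  have key := lintegral_prod_rpow_le_of_dependsOn (μ := μ) (F := F) E hPFIS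
    (fun j => (hx j).1.le) (fun j => (hmeas j).abs.ennreal_ofReal.pow_const _)
    fun j a b hab => by simp only [F, hdep j a b hab]
  simp_rw [hF_rpow, ← ENNReal.ofReal_prod_of_nonneg fun j _ => abs_nonneg (g j _)] at key
  calc ∫ a, ∏ j, |g j a| ∂(Measure.pi μ)
      = (∫⁻ a, ENNReal.ofReal (∏ j, |g j a|) ∂(Measure.pi μ)).toReal :=
        integral_eq_lintegral_of_nonneg_ae (ae_of_all _ fun a => by positivity)
          (measurable_prod _ fun j _ => (hmeas j).abs).aestronglyMeasurable
    _ ≤ (∏ j, (∫⁻ a, F j a ∂(Measure.pi μ)) ^ x j).toReal :=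
        ENNReal.toReal_mono (ENNReal.prod_ne_top fun j _ => ENNReal.rpow_ne_top_of_nonneg
          (hx j).1.le (lintegral_ofReal_abs_rpow_lt_top (hbdd j).choose_spec (hx₀ j)).ne) key
    _ = ∏ j, (∫ a, |g j a| ^ (1 / x j) ∂(Measure.pi μ)) ^ x j := by
        rw [ENNReal.toReal_prod]
        refine prod_congr rfl fun j _ => ?_
        rw [← ENNReal.toReal_rpow,
          integral_abs_rpow_eq_toReal_lintegral (hmeas j).aemeasurable (hx₀ j)]
end

section
/- Rigidity of token counting (conservation step): Let N be a bipartite network of sources S_1,...,S_I and parties A_1,...,A_J such that no two distinct parties share more than one common source (NDCS). Suppose each party's output n_j is a function of the received source values {s_i : i→j}, and the total ∑_j n_j({s_i}) is constant over all source values. Fix reference values r_i for each source and define R_i^j({s_{i'} : i'→j}) = n_j({s_{i'}}) - n_j({ŝ_{i'}^i}) where ŝ_{i'}^i replaces s_i by r_i. Then each R_i^j depends only on s_i, i.e., R_i^j({s_{i'} : i'→j}) = R_i^j(s_i). -/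
/-!
Write `R_i^j t = n_j t - n_j (t with s_i reset to r_i)`. Changing a coordinate `a ≠ i` leaves
`R_i^j` unchanged when `a` or `i` is not connected to `j`, by locality. If both are connected to
`j`, then by NDCS every other party `j'` misses `a` or `i`, so all `R_i^{j'}` with `j' ≠ j` are
unchanged; since conservation makes `∑_j R_i^j = 0`, `R_i^j` is unchanged too. Changing the
coordinates other than `i` one at a time shows that `R_i^j` depends on `s_i` alone.
-/

open Function

section DependsOn

variable {ι β : Type*} [DecidableEq ι] {α : ι → Type*} {f : (∀ i, α i) → β} {s : Set ι}

theorem DependsOn.apply_update_of_notMem (hf : DependsOn f s) {a : ι} (ha : a ∉ s)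
    (x : ∀ i, α i) (v : α a) : f (Function.update x a v) = f x :=
  hf fun _ hk => update_of_ne (ne_of_mem_of_not_mem hk ha) v x

theorem dependsOn_of_apply_update_eq [Finite ι]
    (hf : ∀ x a (v : α a), a ∉ s → f (update x a v) = f x) : DependsOn f s := by
  have := Fintype.ofFinite ι
  intro x y hxy
  suffices key : ∀ A : Finset ι, ∀ x : ∀ i, α i,
      (∀ k ∉ A, x k = y k) → (∀ k ∈ s, x k = y k) → f x = f y from
    key Finset.univ x (fun k hk => absurd (Finset.mem_univ k) hk) hxy
  intro A
  induction A using Finset.induction_on with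
  | empty => exact fun x hx _ => congrArg f (funext fun k => hx k (Finset.notMem_empty k))
  | insert a A _ ih =>
    intro x hx hxs
    have hupdate : f (update x a (y a)) = f x := by
      by_cases ha : a ∈ s
      · rw [← hxs a ha, update_eq_self]
      · exact hf x a (y a) ha
    rw [← hupdate]
    refine ih _ (fun k hk => ?_) (fun k hk => ?_)
    · rcases eq_or_ne k a with rfl | hka
      · exact update_self k (y k) x
      · rw [update_of_ne hka]; exact hx k (by simp [hka, hk])
    · rcases eq_or_ne k a with rfl | hka
      · exact update_self k (y k) x
      · rw [update_of_ne hka]; exact hxs k hk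

end DependsOn

theorem Fintype.apply_eq_of_sum_eq_of_forall_ne {κ G : Type*} [Fintype κ] [AddCommGroup G]
    {f g : κ → G} (hsum : ∑ j, f j = ∑ j, g j) (j : κ) (hne : ∀ j' ≠ j, f j' = g j') :
    f j = g j := by
  have hsub : ∑ j', (f j' - g j') = f j - g j :=
    Finset.sum_eq_single j (fun j' _ hj' => sub_eq_zero.2 (hne j' hj')) (by simp)
  rw [← sub_eq_zero, ← hsub, Finset.sum_sub_distrib, hsum, sub_self]

def NoDoubleCommonSource {ι κ : Type*} (E : ι → κ → Prop) : Prop :=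
  ∀ ⦃i i' j j'⦄, i ≠ i' → E i j → E i' j → E i j' → E i' j' → j = j'

section ResetDiff

variable {ι κ G : Type*} [DecidableEq ι] {S : ι → Type*} [AddCommGroup G]

/-- The quantity `R_i^j` of the paper, for `f = n_j`. -/
def resetDiff (f : (∀ i, S i) → G) (r : ∀ i, S i) (i : ι) (t : ∀ i, S i) : G :=
  f t - f (update t i (r i))

variable {f : (∀ i, S i) → G} {s : Set ι} {r : ∀ i, S i} {i : ι}

theorem DependsOn.resetDiff (hf : DependsOn f s) : DependsOn (resetDiff f r i) s := by
  intro x y hxy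
  have hupdate : ∀ k ∈ s, Function.update x i (r i) k = Function.update y i (r i) k :=
    fun k hk => by
      by_cases hki : k = i
      · subst hki; simp only [update_self]
      · simp only [update_of_ne hki, hxy k hk]
  rw [_root_.resetDiff, _root_.resetDiff, hf hxy, hf hupdate]

theorem resetDiff_eq_zero (hf : DependsOn f s) (hi : i ∉ s) (t : ∀ i, S i) :
    resetDiff f r i t = 0 := by
  rw [resetDiff, hf.apply_update_of_notMem hi, sub_self]

theorem resetDiff_update_of_notMem_or_notMem (hf : DependsOn f s) {a : ι} (h : a ∉ s ∨ i ∉ s)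
    (t : ∀ i, S i) (v : S a) : resetDiff f r i (update t a v) = resetDiff f r i t := by
  rcases h with ha | hi
  · exact hf.resetDiff.apply_update_of_notMem ha t v
  · rw [resetDiff_eq_zero hf hi, resetDiff_eq_zero hf hi]

variable [Fintype κ] {E : ι → κ → Prop} {n : κ → (∀ i, S i) → G}

theorem sum_resetDiff_eq_zero {N : G} (hconst : ∀ t, ∑ j, n j t = N) (t : ∀ i, S i) :
    ∑ j, resetDiff (n j) r i t = 0 := by
  simp only [resetDiff, Finset.sum_sub_distrib, hconst, sub_self]

theorem resetDiff_update_of_ne (hE : NoDoubleCommonSource E)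
    (hdep : ∀ j, DependsOn (n j) {k | E k j}) {N : G} (hconst : ∀ t, ∑ j, n j t = N)
    (j : κ) {a : ι} (hai : a ≠ i) (t : ∀ i, S i) (v : S a) :
    resetDiff (n j) r i (update t a v) = resetDiff (n j) r i t := by
  by_cases hj : E a j ∧ E i j
  · refine Fintype.apply_eq_of_sum_eq_of_forall_ne (f := fun j => resetDiff (n j) r i _)
      ((sum_resetDiff_eq_zero hconst _).trans (sum_resetDiff_eq_zero hconst t).symm) j fun j' hj' => ?_
    refine resetDiff_update_of_notMem_or_notMem (hdep j') ?_ t v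
    by_contra! h
    exact hj' (hE hai h.1 h.2 hj.1 hj.2)
  · exact resetDiff_update_of_notMem_or_notMem (hdep j) (not_and_or.1 hj) t v

theorem dependsOn_resetDiff [Finite ι] (hE : NoDoubleCommonSource E)
    (hdep : ∀ j, DependsOn (n j) {k | E k j}) {N : G} (hconst : ∀ t, ∑ j, n j t = N) (j : κ) :
    DependsOn (resetDiff (n j) r i) {i} :=
  dependsOn_of_apply_update_eq fun t _ v ha =>
    resetDiff_update_of_ne hE hdep hconst j (Set.notMem_singleton_iff.1 ha) t v

end ResetDiff

theorem TC_conservation_step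
    {I J : ℕ} (S : Fin I → Type*)
    (E : Fin I → Fin J → Prop)
    (hNDCS : ¬ ∃ (i i' : Fin I) (j j' : Fin J),
      i ≠ i' ∧ j ≠ j' ∧ E i j ∧ E i j' ∧ E i' j ∧ E i' j')
    (n : Fin J → (∀ i, S i) → ℤ)
    (hdep : ∀ j, ∀ s s' : ∀ i, S i, (∀ i, E i j → s i = s' i) → n j s = n j s')
    (N : ℤ) (hconst : ∀ s : ∀ i, S i, ∑ j, n j s = N)
    (r : ∀ i, S i) :
    ∀ (i : Fin I) (j : Fin J), E i j →
      ∀ s s' : ∀ i, S i, s i = s' i →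
        n j s - n j (Function.update s i (r i))
          = n j s' - n j (Function.update s' i (r i)) := by
  have hE : NoDoubleCommonSource E := fun i i' j j' hii' hij hi'j hij' hi'j' => by
    by_contra hjj'
    exact hNDCS ⟨i, i', j, j', hii', hjj', hij, hij', hi'j, hi'j'⟩
  intro i j _ s s' hss'
  exact dependsOn_resetDiff (r := r) hE hdep hconst j (by simpa using hss')
end

section
/- At most one color per source value: In the setting of color-matching rigidity (ECS network, indicator functions φ_i^(c) with g_j^(c) = ∏_{i:i→j} φ_i^(c), and the distribution has the property that no two parties sharing a source ever simultaneously output color matches with different colors, while Pr(A_j outputs c) > 0 for all j, c), one has ∑_c φ_i^(c)(s_i) ≤ 1 for every source S_i and value s_i. -/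
/-!
Fix a source `S_i`, a value `s` of it and two colors `c, c'` with `φ_i^(c)(s) = φ_i^(c')(s) = 1`.
By ECS there are parties `A_j, A_j'` whose only common source is `S_i`. Take configurations in
which `A_j` outputs `c`, resp. `A_j'` outputs `c'`, and glue them: sources of `A_j` follow the
first, the other sources the second, and `S_i` takes the value `s`. Since the two parties share
no other source, both color matches still occur in the glued configuration, so `c = c'`. Hence
at most one of the 0/1 values `φ_i^(c)(s)` equals 1.
-/

open Finset

theorem Finset.prod_eq_one_iff_of_zero_or_one {ι M : Type*} [CommMonoidWithZero M] [Nontrivial M]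
    {s : Finset ι} {f : ι → M} (hf : ∀ i ∈ s, f i = 0 ∨ f i = 1) :
    ∏ i ∈ s, f i = 1 ↔ ∀ i ∈ s, f i = 1 := by
  refine ⟨fun h i hi => (hf i hi).resolve_left fun h0 => ?_, Finset.prod_eq_one⟩
  exact zero_ne_one (Finset.prod_eq_zero hi h0 ▸ h)

theorem Finset.sum_le_one_of_zero_or_one {ι R : Type*} [AddCommMonoid R] [One R] [Preorder R]
    [ZeroLEOneClass R] {s : Finset ι} {f : ι → R} (hf : ∀ i ∈ s, f i = 0 ∨ f i = 1)
    (huniq : ∀ i ∈ s, ∀ i' ∈ s, f i = 1 → f i' = 1 → i = i') :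
    ∑ i ∈ s, f i ≤ 1 := by
  by_cases h : ∃ a ∈ s, f a = 1
  · obtain ⟨a, ha, hfa⟩ := h
    have hsum : ∑ i ∈ s, f i = f a := Finset.sum_eq_single_of_mem a ha fun i hi hia =>
      (hf i hi).resolve_right fun hfi => hia (huniq i hi a ha hfi hfa)
    exact (hsum.trans hfa).le
  · push Not at h
    rw [Finset.sum_eq_zero fun i hi => (hf i hi).resolve_right (h i hi)]
    exact zero_le_one

theorem exists_pi_glue_of_inter_subset_singleton {ι : Type*} {S : ι → Type*}
    {A B : Set ι} {i : ι} (hAB : A ∩ B ⊆ {i}) (x : S i) (s₀ s₁ : ∀ k, S k) :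
    ∃ t : ∀ k, S k, t i = x ∧ (∀ k ∈ A, k ≠ i → t k = s₀ k) ∧ (∀ k ∈ B, k ≠ i → t k = s₁ k) := by
  classical
  refine ⟨Function.update (fun k => if k ∈ A then s₀ k else s₁ k) i x, by simp, ?_, ?_⟩
  · intro k hk hki
    simp [hki, hk]
  · intro k hk hki
    have hkA : k ∉ A := fun hkA => hki (hAB ⟨hkA, hk⟩)
    simp [hki, hkA]

theorem CM_at_most_one_color_general
    {I J C : ℕ}
    (S : Fin I → Type*)
    (E : Fin I → Fin J → Prop) [∀ i j, Decidable (E i j)]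
    -- ECS: every source is the exclusive common source of two parties connected to it
    (hECS : ∀ i, ∃ j j' : Fin J, j ≠ j' ∧ E i j ∧ E i j' ∧
      ∀ i', E i' j → E i' j' → i' = i)
    (φ : (i : Fin I) → Fin C → S i → ℝ)
    (hφ : ∀ i c s, φ i c s = 0 ∨ φ i c s = 1)
    (g : Fin J → Fin C → (∀ i, S i) → ℝ)
    -- g_j^(c) = ∏_{i: i→j} φ_i^(c)
    (hg : ∀ j c (s : ∀ i, S i),
      g j c s = ∏ i ∈ univ.filter (fun i => E i j), φ i c (s i))
    -- Pr(A_j outputs color match c) > 0 for all j, c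
    (hpos : ∀ j c, ∃ s : ∀ i, S i, g j c s = 1)
    -- parties sharing a source never output color matches with different colors
    (hnodiff : ∀ (s : ∀ i, S i) (j j' : Fin J) (c c' : Fin C),
      (∃ i, E i j ∧ E i j') → g j c s = 1 → g j' c' s = 1 → c = c') :
    ∀ i (s : S i), ∑ c, φ i c s ≤ 1 := by
  intro i s
  have match_iff : ∀ j c t, g j c t = 1 ↔ ∀ k, E k j → φ k c (t k) = 1 := fun j c t => by
    rw [hg, Finset.prod_eq_one_iff_of_zero_or_one fun k _ => hφ k c (t k)]
    simp
  have match_of_agree : ∀ j c (t t' : ∀ k, S k), g j c t' = 1 → φ i c (t i) = 1 →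
      (∀ k, E k j → k ≠ i → t k = t' k) → g j c t = 1 := by
    intro j c t t' ht' hti hagree
    refine (match_iff j c t).2 fun k hk => ?_
    rcases eq_or_ne k i with rfl | hki
    · exact hti
    · exact hagree k hk hki ▸ (match_iff j c t').1 ht' k hk
  obtain ⟨j, j', -, hj, hj', hexcl⟩ := hECS i
  refine Finset.sum_le_one_of_zero_or_one (fun c _ => hφ i c s) fun c _ c' _ hc hc' => ?_
  obtain ⟨s₀, hs₀⟩ := hpos j c
  obtain ⟨s₁, hs₁⟩ := hpos j' c'
  obtain ⟨t, hti, ht₀, ht₁⟩ := exists_pi_glue_of_inter_subset_singleton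
    (A := {k | E k j}) (B := {k | E k j'}) (fun k hk => hexcl k hk.1 hk.2) s s₀ s₁
  exact hnodiff t j j' c c' ⟨i, hj, hj'⟩ (match_of_agree j c t s₀ hs₀ (hti ▸ hc) ht₀)
    (match_of_agree j' c' t s₁ hs₁ (hti ▸ hc') ht₁)

theorem CM_at_most_one_color
    {I J C : ℕ}
    (S : Fin I → Type*) [∀ i, Nonempty (S i)]
    (E : Fin I → Fin J → Prop) [∀ i j, Decidable (E i j)]
    -- ECS: every source is the exclusive common source of two parties connected to it
    (hECS : ∀ i, ∃ j j' : Fin J, j ≠ j' ∧ E i j ∧ E i j' ∧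
      ∀ i', E i' j → E i' j' → i' = i)
    (φ : (i : Fin I) → Fin C → S i → ℝ)
    (hφ : ∀ i c s, φ i c s = 0 ∨ φ i c s = 1)
    (g : Fin J → Fin C → (∀ i, S i) → ℝ)
    -- g_j^(c) = ∏_{i: i→j} φ_i^(c)
    (hg : ∀ j c (s : ∀ i, S i),
      g j c s = ∏ i ∈ univ.filter (fun i => E i j), φ i c (s i))
    -- Pr(A_j outputs color match c) > 0 for all j, c
    (hpos : ∀ j c, ∃ s : ∀ i, S i, g j c s = 1)
    -- parties sharing a source never output color matches with different colors
    (hnodiff : ∀ (s : ∀ i, S i) (j j' : Fin J) (c c' : Fin C),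
      (∃ i, E i j ∧ E i j') → g j c s = 1 → g j' c' s = 1 → c = c') :
    ∀ i (s : S i), ∑ c, φ i c s ≤ 1 :=
  CM_at_most_one_color_general S E hECS φ hφ g hg hpos hnodiff
end

section
/- Graph-coloring constraint for the complete-graph CM network: Let n ≥ 5 and assign to each source S_i (i ∈ {1,...,n}) a color c_i ∈ {1,...,n}. Suppose that all n colors appear among c_1,...,c_n (no two sources sharing a party have equal colors, i.e., all c_i are distinct), and that for every pair i < j, c_i + c_j ∈ {i + j, 2(n+1) - (i+j)}. Then either c_i = i for all i, or c_i = n + 1 - i for all i. -/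
/-!
Everything is forced by the colour of source 1. The pairs `(1, 2)` and `(1, 3)` leave only
`c 1 = 1` or `c 1 = n`: any other value makes `c 3 = c 1` or, since `n ≥ 5`, pushes a colour out
of `[1, n]`. Once `c 1` is known, the pair `(1, j)` pins down `c j`, one of the two admissible
sums being out of range except at `j = n`, where both give the same colour.
-/

section CompleteGraphColoring

variable {n : ℕ} {c : ℕ → ℕ}

theorem apply_one_eq_one_or_eq_of_pair_sums (hn : 5 ≤ n)
    (hrange : ∀ i, 1 ≤ i → i ≤ n → 1 ≤ c i ∧ c i ≤ n) (h13 : c 1 ≠ c 3)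
    (hrow : ∀ j, 1 < j → j ≤ n → c 1 + c j = 1 + j ∨ c 1 + c j = 2 * (n + 1) - (1 + j)) :
    c 1 = 1 ∨ c 1 = n := by
  have := hrange 1 le_rfl (by omega)
  have := hrange 2 (by omega) (by omega)
  have := hrange 3 (by omega) (by omega)
  have := hrow 2 (by omega) (by omega)
  have := hrow 3 (by omega) (by omega)
  omega

theorem eq_self_of_apply_one_eq_one (h1 : c 1 = 1) (hle : ∀ i, 1 ≤ i → i ≤ n → c i ≤ n)
    (hrow : ∀ j, 1 < j → j ≤ n → c 1 + c j = 1 + j ∨ c 1 + c j = 2 * (n + 1) - (1 + j)) :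
    ∀ i, 1 ≤ i → i ≤ n → c i = i := by
  intro i hi hin
  rcases hi.eq_or_lt with rfl | hi
  · exact h1
  · have := hle i hi.le hin
    have := hrow i hi hin
    omega

theorem eq_reflect_of_apply_one_eq_last (h1 : c 1 = n) (hpos : ∀ i, 1 ≤ i → i ≤ n → 1 ≤ c i)
    (hrow : ∀ j, 1 < j → j ≤ n → c 1 + c j = 1 + j ∨ c 1 + c j = 2 * (n + 1) - (1 + j)) :
    ∀ i, 1 ≤ i → i ≤ n → c i = n + 1 - i := by
  intro i hi hin
  rcases hi.eq_or_lt with rfl | hi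
  · omega
  · have := hpos i hi.le hin
    have := hrow i hi hin
    omega

end CompleteGraphColoring

theorem complete_graph_CM_coloring (n : ℕ) (hn : 5 ≤ n) (c : ℕ → ℕ)
    (hrange : ∀ i, 1 ≤ i → i ≤ n → 1 ≤ c i ∧ c i ≤ n)
    (hinj : ∀ i j, 1 ≤ i → i ≤ n → 1 ≤ j → j ≤ n → c i = c j → i = j)
    (hpair : ∀ i j, 1 ≤ i → i < j → j ≤ n →
      c i + c j = i + j ∨ c i + c j = 2 * (n + 1) - (i + j)) :
    (∀ i, 1 ≤ i → i ≤ n → c i = i) ∨ (∀ i, 1 ≤ i → i ≤ n → c i = n + 1 - i) := by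
  have hrow := fun j => hpair 1 j le_rfl
  have h13 : c 1 ≠ c 3 := fun h => by
    have := hinj 1 3 le_rfl (by omega) (by omega) (by omega) h
    omega
  rcases apply_one_eq_one_or_eq_of_pair_sums hn hrange h13 hrow with h1 | h1
  · exact .inl (eq_self_of_apply_one_eq_one h1 (fun i hi hin => (hrange i hi hin).2) hrow)
  · exact .inr (eq_reflect_of_apply_one_eq_last h1 (fun i hi hin => (hrange i hi hin).1) hrow)
end
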